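/- arXiv:1812.07400 — 2 statements merged into one kernel-verified Lean document; each statement's English description precedes it below -/
import Mathlib

section
/- For every β > 0 and h ≥ 0, the Jacobian matrix of the vector field V at the origin equals the 2×2 matrix M = [[−2, 2/cosh²(h)], [−2β, 2β/cosh²(h) − 1]], and the characteristic polynomial of M is X² − (2β/cosh²(h) − 3)·X + 2; consequently the eigenvalues of M (as a complex matrix) are k± = β/cosh²(h) − 3/2 ± √((β/cosh²(h) − 3/2)² − 2), where the square root is taken in ℂ. -/
open Polynomial

/-!
Since `tanh' = 1 / cosh²` and `cosh` is even, both `tanh` terms contribute `1 / cosh² h` at the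
origin, which gives the Jacobian. The second row of the Jacobian is `β` times the first minus
`e₁`, so the `β`-terms cancel in the determinant: it equals `2`, while the trace is
`2β / cosh² h − 3`. The eigenvalues are therefore the roots `a ± √(a² − 2)` of `z² − 2az + 2`,
where `a = β / cosh² h − 3/2`.
-/

namespace Real

theorem hasDerivAt_tanh (x : ℝ) : HasDerivAt tanh (1 / cosh x ^ 2) x := by
  have hquot := (hasDerivAt_sinh x).div (hasDerivAt_cosh x) (cosh_pos x).ne'
  rw [show sinh / cosh = tanh from funext fun y => (tanh_eq_sinh_div_cosh y).symm] at hquot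
  refine hquot.congr_deriv ?_
  rw [← cosh_sq_sub_sinh_sq x]
  ring

theorem hasDerivAt_tanh_add_add_tanh_sub (h : ℝ) :
    HasDerivAt (fun y => tanh (y + h) + tanh (y - h)) (2 / cosh h ^ 2) 0 := by
  have hplus := (hasDerivAt_tanh (0 + h)).comp_add_const 0 h
  have hminus := (hasDerivAt_tanh (0 - h)).comp_sub_const 0 h
  refine (hplus.add hminus).congr_deriv ?_
  rw [zero_add, zero_sub, cosh_neg]
  ring

end Real

open Real ContinuousLinearMap

noncomputable def tanhDrift (h : ℝ) (v : Fin 2 → ℝ) : ℝ :=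
  -2 * v 0 + tanh (v 1 + h) + tanh (v 1 - h)

noncomputable def tanhField (β h : ℝ) (v : Fin 2 → ℝ) : Fin 2 → ℝ :=
  ![tanhDrift h v, -(v 1) + β * tanhDrift h v]

noncomputable def tanhFieldJacobian (β h : ℝ) : Matrix (Fin 2) (Fin 2) ℝ :=
  !![-2, 2 / cosh h ^ 2; -2 * β, 2 * β / cosh h ^ 2 - 1]

theorem hasFDerivAt_tanhDrift_zero (h : ℝ) :
    HasFDerivAt (tanhDrift h)
      ((-2 : ℝ) • proj 0 + (2 / cosh h ^ 2) • proj 1 : (Fin 2 → ℝ) →L[ℝ] ℝ) 0 := by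
  have hcoord := (hasDerivAt_tanh_add_add_tanh_sub h).comp_hasFDerivAt (0 : Fin 2 → ℝ)
    (proj 1 : (Fin 2 → ℝ) →L[ℝ] ℝ).hasFDerivAt
  unfold tanhDrift
  simp only [add_assoc]
  exact ((proj 0 : (Fin 2 → ℝ) →L[ℝ] ℝ).hasFDerivAt.const_mul (-2)).add hcoord

theorem hasFDerivAt_tanhField_zero (β h : ℝ) :
    HasFDerivAt (tanhField β h)
      (Matrix.toLin' (tanhFieldJacobian β h)).toContinuousLinearMap 0 := by
  have hdrift := hasFDerivAt_tanhDrift_zero h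
  refine hasFDerivAt_pi'' (Fin.forall_fin_two.2 ⟨hdrift.congr_fderiv ?_,
    ((proj 1 : (Fin 2 → ℝ) →L[ℝ] ℝ).hasFDerivAt.neg.add (hdrift.const_mul β)).congr_fderiv ?_⟩)
  all_goals
    ext j
    simp only [tanhFieldJacobian, add_apply, neg_apply, smul_apply, proj_apply, comp_apply,
      LinearMap.coe_toContinuousLinearMap', Matrix.toLin'_apply, Matrix.mulVec_fin_two,
      Matrix.of_apply, Matrix.cons_val_zero, Matrix.cons_val_one, Matrix.cons_val_fin_one,
      smul_eq_mul]
  ring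

theorem fderiv_tanhField_zero_apply (β h : ℝ) (v : Fin 2 → ℝ) :
    fderiv ℝ (tanhField β h) 0 v = (tanhFieldJacobian β h).mulVec v := by
  rw [(hasFDerivAt_tanhField_zero β h).fderiv, LinearMap.coe_toContinuousLinearMap',
    Matrix.toLin'_apply]

theorem charpoly_tanhFieldJacobian (β h : ℝ) :
    (tanhFieldJacobian β h).charpoly = X ^ 2 - C (2 * β / cosh h ^ 2 - 3) * X + C 2 := by
  have hcosh : cosh h ^ 2 ≠ 0 := pow_ne_zero 2 (cosh_pos h).ne'
  have htrace : (tanhFieldJacobian β h).trace = 2 * β / cosh h ^ 2 - 3 := by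
    rw [tanhFieldJacobian, Matrix.trace_fin_two_of]
    ring
  have hdet : (tanhFieldJacobian β h).det = 2 := by
    rw [tanhFieldJacobian, Matrix.det_fin_two_of]
    field_simp
    ring
  rw [Matrix.charpoly_fin_two, htrace, hdet]

theorem Matrix.mem_spectrum_iff_of_charpoly_eq {n K : Type*} [Fintype n] [DecidableEq n]
    [Field K] {A : Matrix n n K} {a d s : K} (hA : A.charpoly = X ^ 2 - C (2 * a) * X + C d)
    (hs : s ^ 2 = a ^ 2 - d) (z : K) :
    z ∈ spectrum K A ↔ z = a + s ∨ z = a - s := by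
  have hfactor : (z - (a + s)) * (z - (a - s)) = z ^ 2 - 2 * a * z + d := by
    linear_combination -hs
  rw [Matrix.mem_spectrum_iff_isRoot_charpoly, hA, IsRoot.def]
  simp only [eval_add, eval_sub, eval_mul, eval_pow, eval_X, eval_C]
  rw [← hfactor, mul_eq_zero, sub_eq_zero, sub_eq_zero]

theorem jacobian_charpoly_eigenvalues_general (β h : ℝ)
    (V : (Fin 2 → ℝ) → (Fin 2 → ℝ))
    (hV : ∀ v, V v =
      ![-2 * v 0 + Real.tanh (v 1 + h) + Real.tanh (v 1 - h),
        -(v 1) + β * (-2 * v 0 + Real.tanh (v 1 + h) + Real.tanh (v 1 - h))])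
    (M : Matrix (Fin 2) (Fin 2) ℝ)
    (hM : M = !![-2, 2 / Real.cosh h ^ 2; -2 * β, 2 * β / Real.cosh h ^ 2 - 1]) :
    (∀ v, fderiv ℝ V 0 v = M.mulVec v) ∧
    M.charpoly = X ^ 2 - C (2 * β / Real.cosh h ^ 2 - 3) * X + C 2 ∧
    (∀ z : ℂ, z ∈ spectrum ℂ (M.map (fun x : ℝ => (x : ℂ))) ↔
      z = ((β / Real.cosh h ^ 2 - 3 / 2 : ℝ) : ℂ)
            + (((β / Real.cosh h ^ 2 - 3 / 2 : ℝ) : ℂ) ^ 2 - 2) ^ ((1 : ℂ) / 2) ∨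
      z = ((β / Real.cosh h ^ 2 - 3 / 2 : ℝ) : ℂ)
            - (((β / Real.cosh h ^ 2 - 3 / 2 : ℝ) : ℂ) ^ 2 - 2) ^ ((1 : ℂ) / 2)) := by
  obtain rfl : V = tanhField β h := funext hV
  obtain rfl : M = tanhFieldJacobian β h := hM
  refine ⟨fderiv_tanhField_zero_apply β h, charpoly_tanhFieldJacobian β h, ?_⟩
  set a : ℝ := β / cosh h ^ 2 - 3 / 2
  have hcharpoly_complex : ((tanhFieldJacobian β h).map fun x : ℝ => (x : ℂ)).charpoly =
      X ^ 2 - C (2 * (a : ℂ)) * X + C 2 := by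
    rw [show (fun x : ℝ => (x : ℂ)) = Complex.ofRealHom from rfl, Matrix.charpoly_map,
      charpoly_tanhFieldJacobian]
    simp only [Polynomial.map_add, Polynomial.map_sub, Polynomial.map_mul, Polynomial.map_pow,
      map_X, map_C]
    congr
    push_cast [a, Complex.ofRealHom_eq_coe]
    ring
  exact Matrix.mem_spectrum_iff_of_charpoly_eq hcharpoly_complex
    (by rw [one_div, Complex.cpow_ofNat_inv_pow])

/-- For `β > 0` and `h ≥ 0`, the Jacobian at the origin of the vector field
`V(v) = (−2v₀ + tanh(v₁+h) + tanh(v₁−h), −v₁ + β(−2v₀ + tanh(v₁+h) + tanh(v₁−h)))`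
is the matrix `M = [[−2, 2/cosh²h], [−2β, 2β/cosh²h − 1]]`, the characteristic
polynomial of `M` is `X² − (2β/cosh²h − 3)X + 2`, and the eigenvalues of `M`
over `ℂ` are `β/cosh²h − 3/2 ± √((β/cosh²h − 3/2)² − 2)` (square root in `ℂ`). -/
theorem jacobian_charpoly_eigenvalues (β h : ℝ) (hβ : 0 < β) (hh : 0 ≤ h)
    (V : (Fin 2 → ℝ) → (Fin 2 → ℝ))
    (hV : ∀ v, V v =
      ![-2 * v 0 + Real.tanh (v 1 + h) + Real.tanh (v 1 - h),
        -(v 1) + β * (-2 * v 0 + Real.tanh (v 1 + h) + Real.tanh (v 1 - h))])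
    (M : Matrix (Fin 2) (Fin 2) ℝ)
    (hM : M = !![-2, 2 / Real.cosh h ^ 2; -2 * β, 2 * β / Real.cosh h ^ 2 - 1]) :
    (∀ v, fderiv ℝ V 0 v = M.mulVec v) ∧
    M.charpoly = X ^ 2 - C (2 * β / Real.cosh h ^ 2 - 3) * X + C 2 ∧
    (∀ z : ℂ, z ∈ spectrum ℂ (M.map (fun x : ℝ => (x : ℂ))) ↔
      z = ((β / Real.cosh h ^ 2 - 3 / 2 : ℝ) : ℂ)
            + (((β / Real.cosh h ^ 2 - 3 / 2 : ℝ) : ℂ) ^ 2 - 2) ^ ((1 : ℂ) / 2) ∨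
      z = ((β / Real.cosh h ^ 2 - 3 / 2 : ℝ) : ℂ)
            - (((β / Real.cosh h ^ 2 - 3 / 2 : ℝ) : ℂ) ^ 2 - 2) ^ ((1 : ℂ) / 2)) :=
  jacobian_charpoly_eigenvalues_general β h V hV M hM
end

section
/- Let h > (1/2)·ln(2+√3) and β = (3/2)·cosh²(h). Then there exists exactly one λ > 0 such that Γ_{β,h}(λ) = λ. -/
/-!
With `c = cosh 2h` one has `β / 3 = (c + 1) / 4` and
`tanh (x + h) + tanh (x - h) = 2 sinh 2x / (cosh 2x + c)`, so `Γ x = x` iff `F (2x) = 0` for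
`F t = (c + 1) sinh t - t (cosh t + c)`. Here `F 0 = F' 0 = F'' 0 = 0` and `F'' = cosh · k` with
`k = (c - 1) tanh - id`, while `k'` has the sign of `c - 1 - cosh²`: decreasing, and positive at
`0` exactly when `c > 2`, i.e. when `h > ½ log (2 + √3)`. A function vanishing at `0` and tending
to `-∞` whose derivative is positive and then negative is itself positive and then negative;
applied to `k`, `F'` and `F` in turn, this gives `F` exactly one positive zero.
-/

open Real Set Filter

def PosThenNeg (g : ℝ → ℝ) (a b : ℝ) : Prop :=
  a < b ∧ (∀ t ∈ Ioo a b, 0 < g t) ∧ ∀ t ∈ Ioi b, g t < 0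

namespace PosThenNeg

variable {g : ℝ → ℝ} {a b : ℝ}

lemma mul_left {w : ℝ → ℝ} (hw : ∀ t, 0 < w t) (hg : PosThenNeg g a b) :
    PosThenNeg (fun t => w t * g t) a b :=
  ⟨hg.1, fun t ht => mul_pos (hw t) (hg.2.1 t ht),
    fun t ht => mul_neg_of_pos_of_neg (hw t) (hg.2.2 t ht)⟩

lemma eq_of_apply_eq_zero (hg : PosThenNeg g a b) {t : ℝ} (hat : a < t) (ht : g t = 0) : t = b := by
  obtain ⟨-, hpos, hneg⟩ := hg
  rcases lt_trichotomy t b with htb | htb | htb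
  · exact absurd ht (hpos t ⟨hat, htb⟩).ne'
  · exact htb
  · exact absurd ht (hneg t htb).ne

end PosThenNeg

lemma tendsto_atBot_of_eventually_le_const_sub {g : ℝ → ℝ} {C : ℝ}
    (hg : ∀ᶠ t in atTop, g t ≤ C - t) : Tendsto g atTop atBot :=
  tendsto_atBot_mono' _ hg <| by
    simpa only [← sub_eq_add_neg] using tendsto_atBot_add_const_left _ C tendsto_neg_atTop_atBot

lemma tendsto_atBot_of_hasDerivAt_of_tendsto_atBot {g g' : ℝ → ℝ}
    (hg : ∀ t, HasDerivAt g (g' t) t) (hg' : Tendsto g' atTop atBot) :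
    Tendsto g atTop atBot := by
  obtain ⟨T, hT⟩ := eventually_atTop.mp (hg'.eventually_le_atBot (-1))
  have hslope : ∀ t ≥ T, g t - g T ≤ -1 * (t - T) := fun t ht =>
    (convex_Ici T).image_sub_le_mul_sub_of_deriv_le
      (fun s _ => (hg s).continuousAt.continuousWithinAt)
      (fun s _ => (hg s).differentiableAt.differentiableWithinAt)
      (fun s hs => by rw [(hg s).deriv]; exact hT s (interior_subset hs))
      T self_mem_Ici t ht ht
  refine tendsto_atBot_of_eventually_le_const_sub (C := g T + T) ?_
  filter_upwards [eventually_ge_atTop T] with t ht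
  linarith [hslope t ht]

lemma exists_zero_posThenNeg_of_strictAntiOn {u : ℝ → ℝ} {a : ℝ}
    (hcont : ContinuousOn u (Ici a)) (hanti : StrictAntiOn u (Ici a)) (ha : 0 < u a)
    (hu : Tendsto u atTop atBot) : ∃ b, u b = 0 ∧ PosThenNeg u a b := by
  obtain ⟨T, hTneg, haT⟩ := ((hu.eventually_lt_atBot 0).and (eventually_ge_atTop a)).exists
  obtain ⟨b, ⟨hab, hbT⟩, hb⟩ :=
    intermediate_value_Icc' haT (hcont.mono Icc_subset_Ici_self) ⟨hTneg.le, ha.le⟩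
  have hab : a < b := lt_of_le_of_ne hab (by rintro rfl; exact ha.ne' hb)
  refine ⟨b, hb, hab, fun t ht => ?_, fun t ht => ?_⟩
  · exact hb ▸ hanti (mem_Ici.mpr ht.1.le) (mem_Ici.mpr hab.le) ht.2
  · exact hb ▸ hanti (mem_Ici.mpr hab.le) (mem_Ici.mpr (hab.trans ht).le) ht

lemma exists_zero_posThenNeg_of_hasDerivAt {g g' : ℝ → ℝ} {a b : ℝ}
    (hg : ∀ t, HasDerivAt g (g' t) t) (ha : g a = 0) (hg' : PosThenNeg g' a b)
    (hlim : Tendsto g atTop atBot) : ∃ b', g b' = 0 ∧ PosThenNeg g a b' := by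
  obtain ⟨hab, hpos, hneg⟩ := hg'
  have hcont : Continuous g := continuous_iff_continuousAt.mpr fun t => (hg t).continuousAt
  have hmono : StrictMonoOn g (Icc a b) :=
    strictMonoOn_of_hasDerivWithinAt_pos (convex_Icc a b) hcont.continuousOn
      (fun t _ => (hg t).hasDerivWithinAt) (by simpa only [interior_Icc] using hpos)
  have hanti : StrictAntiOn g (Ici b) :=
    strictAntiOn_of_hasDerivWithinAt_neg (convex_Ici b) hcont.continuousOn
      (fun t _ => (hg t).hasDerivWithinAt) (by simpa only [interior_Ici] using hneg)
  have hgb : 0 < g b := ha ▸ hmono (left_mem_Icc.mpr hab.le) (right_mem_Icc.mpr hab.le) hab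
  obtain ⟨b', hb', hbb', hpos', hneg'⟩ :=
    exists_zero_posThenNeg_of_strictAntiOn hcont.continuousOn hanti hgb hlim
  refine ⟨b', hb', hab.trans hbb', fun t ht => ?_, hneg'⟩
  rcases le_or_gt t b with htb | htb
  · exact ha ▸ hmono (left_mem_Icc.mpr hab.le) ⟨ht.1.le, htb⟩ ht.1
  · exact hpos' t ⟨htb, ht.2⟩

noncomputable def fixedPointResidual (c t : ℝ) : ℝ := (c + 1) * sinh t - t * (cosh t + c)

section Residual

variable (c : ℝ)

lemma hasDerivAt_fixedPointResidual (t : ℝ) :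
    HasDerivAt (fixedPointResidual c) (c * (cosh t - 1) - t * sinh t) t :=
  (((hasDerivAt_sinh t).const_mul (c + 1)).sub
    ((hasDerivAt_id t).mul ((hasDerivAt_cosh t).add_const c))).congr_deriv <| by
      simp only [one_mul, id_eq]
      ring

lemma hasDerivAt_fixedPointResidual_deriv (t : ℝ) :
    HasDerivAt (fun t => c * (cosh t - 1) - t * sinh t) (cosh t * ((c - 1) * tanh t - t)) t :=
  ((((hasDerivAt_cosh t).sub_const 1).const_mul c).sub
    ((hasDerivAt_id t).mul (hasDerivAt_sinh t))).congr_deriv <| by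
      rw [tanh_eq_sinh_div_cosh]
      field_simp [(cosh_pos t).ne']
      simp only [id_eq]
      ring

lemma hasDerivAt_mul_tanh_sub_self (t : ℝ) :
    HasDerivAt (fun t => (c - 1) * tanh t - t) ((cosh t ^ 2)⁻¹ * (c - 1 - cosh t ^ 2)) t := by
  simp only [tanh_eq_sinh_div_cosh]
  refine ((((hasDerivAt_sinh t).div (hasDerivAt_cosh t) (cosh_pos t).ne').const_mul (c - 1)).sub
    (hasDerivAt_id t)).congr_deriv ?_
  field_simp [(cosh_pos t).ne']
  linear_combination (c - 1) * cosh_sq t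

variable {c}

lemma tendsto_mul_tanh_sub_self_atBot (hc : 1 ≤ c) :
    Tendsto (fun t => (c - 1) * tanh t - t) atTop atBot :=
  tendsto_atBot_of_eventually_le_const_sub (C := c - 1) <| Eventually.of_forall fun t => by
    nlinarith [tanh_lt_one t]

lemma tendsto_fixedPointResidual_deriv_atBot (hc : 1 ≤ c) :
    Tendsto (fun t => c * (cosh t - 1) - t * sinh t) atTop atBot := by
  refine tendsto_atBot_of_hasDerivAt_of_tendsto_atBot (hasDerivAt_fixedPointResidual_deriv c) <|
    tendsto_atBot_of_eventually_le_const_sub (C := c - 1) ?_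
  filter_upwards [(tendsto_mul_tanh_sub_self_atBot hc).eventually_le_atBot 0] with t ht
  nlinarith [one_le_cosh t, tanh_lt_one t]

lemma tendsto_fixedPointResidual_atBot (hc : 1 ≤ c) :
    Tendsto (fixedPointResidual c) atTop atBot :=
  tendsto_atBot_of_hasDerivAt_of_tendsto_atBot (hasDerivAt_fixedPointResidual c)
    (tendsto_fixedPointResidual_deriv_atBot hc)

lemma exists_zero_posThenNeg_fixedPointResidual (hc : 2 < c) :
    ∃ b, fixedPointResidual c b = 0 ∧ PosThenNeg (fixedPointResidual c) 0 b := by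
  have hc1 : 1 ≤ c := by linarith
  have hcosh_sq : StrictMonoOn (fun t => cosh t ^ 2) (Ici 0) := fun s hs t ht hst =>
    pow_lt_pow_left₀ (cosh_strictMonoOn hs ht hst) (cosh_pos s).le two_ne_zero
  obtain ⟨_, -, hk'⟩ := exists_zero_posThenNeg_of_strictAntiOn (u := fun t => c - 1 - cosh t ^ 2)
    (by fun_prop) (fun s hs t ht hst => sub_lt_sub_left (hcosh_sq hs ht hst) _)
    (by simp only [cosh_zero]; linarith) <|
    tendsto_atBot_of_eventually_le_const_sub (C := c - 1) <| by
      filter_upwards [eventually_ge_atTop 0] with t ht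
      nlinarith [one_le_cosh t, sinh_lt_cosh t, self_le_sinh_iff.mpr ht]
  obtain ⟨_, -, hk⟩ := exists_zero_posThenNeg_of_hasDerivAt (hasDerivAt_mul_tanh_sub_self c)
    (by simp) (hk'.mul_left fun t => by positivity) (tendsto_mul_tanh_sub_self_atBot hc1)
  obtain ⟨_, -, hf'⟩ := exists_zero_posThenNeg_of_hasDerivAt
    (hasDerivAt_fixedPointResidual_deriv c) (by simp) (hk.mul_left cosh_pos)
    (tendsto_fixedPointResidual_deriv_atBot hc1)
  exact exists_zero_posThenNeg_of_hasDerivAt (hasDerivAt_fixedPointResidual c)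
    (by simp [fixedPointResidual]) hf' (tendsto_fixedPointResidual_atBot hc1)

end Residual

lemma tanh_add_add_tanh_sub (x h : ℝ) :
    tanh (x + h) + tanh (x - h) = 2 * sinh (2 * x) / (cosh (2 * x) + cosh (2 * h)) := by
  have hx : 2 * x = (x + h) + (x - h) := by ring
  have hh : 2 * h = (x + h) - (x - h) := by ring
  rw [hx, hh, sinh_add (x + h), cosh_add (x + h), cosh_sub (x + h), tanh_eq_sinh_div_cosh,
    tanh_eq_sinh_div_cosh]
  field_simp [(cosh_pos (x + h)).ne', (cosh_pos (x - h)).ne']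
  ring

lemma cosh_log_two_add_sqrt_three : cosh (log (2 + √3)) = 2 := by
  have h3 : √3 ^ 2 = 3 := sq_sqrt (by norm_num)
  have hinv : (2 + √3)⁻¹ = 2 - √3 := inv_eq_of_mul_eq_one_right (by linear_combination -h3)
  rw [cosh_log (by positivity), hinv]
  ring

lemma two_lt_cosh_two_mul {h : ℝ} (hh : 1 / 2 * log (2 + √3) < h) : 2 < cosh (2 * h) := by
  have hlog : 0 < log (2 + √3) := log_pos (by linarith [sqrt_nonneg 3])
  calc 2 = cosh (log (2 + √3)) := cosh_log_two_add_sqrt_three.symm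
    _ < cosh (2 * h) := by
      rw [cosh_lt_cosh, abs_of_pos hlog, abs_of_pos (by linarith)]
      linarith

noncomputable def gammaMap (β h x : ℝ) : ℝ := β / 3 * (tanh (x + h) + tanh (x - h))

lemma gammaMap_eq_self_iff (h x : ℝ) :
    gammaMap (3 / 2 * cosh h ^ 2) h x = x ↔ fixedPointResidual (cosh (2 * h)) (2 * x) = 0 := by
  have hden : 0 < cosh (2 * x) + cosh (2 * h) := by positivity
  have hβ : 3 / 2 * cosh h ^ 2 / 3 = (cosh (2 * h) + 1) / 4 := by
    rw [cosh_two_mul, cosh_sq']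
    ring
  rw [gammaMap, hβ, tanh_add_add_tanh_sub, fixedPointResidual, mul_div_assoc', div_eq_iff hden.ne']
  constructor <;> intro hx <;> linarith

/-- For `h > (1/2)ln(2+√3)` and `β = (3/2)cosh²h`, the fixed point equation
`Γ_{β,h}(x) = x` has exactly one positive solution. -/
theorem unique_positive_fixed_point_critical (β h : ℝ)
    (hh : 1 / 2 * Real.log (2 + Real.sqrt 3) < h)
    (hβ : β = 3 / 2 * Real.cosh h ^ 2)
    (Γ : ℝ → ℝ)
    (hΓ : ∀ x, Γ x = β / 3 * (Real.tanh (x + h) + Real.tanh (x - h))) :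
    ∃! x : ℝ, 0 < x ∧ Γ x = x := by
  have hfix (x : ℝ) : Γ x = x ↔ fixedPointResidual (cosh (2 * h)) (2 * x) = 0 := by
    rw [hΓ, hβ]
    exact gammaMap_eq_self_iff h x
  obtain ⟨b, hb, hsign⟩ := exists_zero_posThenNeg_fixedPointResidual (two_lt_cosh_two_mul hh)
  refine ⟨b / 2, ⟨half_pos hsign.1, (hfix _).mpr (by rwa [mul_div_cancel₀ b two_ne_zero])⟩, ?_⟩
  rintro x ⟨hx, hΓx⟩
  have h2x := hsign.eq_of_apply_eq_zero (by positivity) ((hfix x).mp hΓx)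
  linarith
end
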